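/- arXiv:2411.19936 — 6 statements merged into one kernel-verified Lean document; each statement's English description precedes it below -/
import Mathlib

section
/- For every x ∈ Z, the set Fin(x) ∪ (−Fin(x)) is a closed root subsystem of Φ; that is, it is stable under negation and whenever λ, μ ∈ Fin(x) ∪ (−Fin(x)) and λ + μ ∈ Φ, one also has λ + μ ∈ Fin(x) ∪ (−Fin(x)). -/
open scoped Classical
noncomputable section

/-- A reduced crystallographic root system spanning `E`. -/
def IsRootSystem {E : Type*} [AddCommGroup E] [Module ℚ E] (Φ : Set E) : Prop :=
  Φ.Finite ∧ (0 : E) ∉ Φ ∧ Submodule.span ℚ Φ = ⊤ ∧ (∀ α ∈ Φ, -α ∈ Φ) ∧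
    (∀ α ∈ Φ, ∃ f : E →ₗ[ℚ] ℚ, f α = 2 ∧ (∀ β ∈ Φ, ∃ n : ℤ, f β = (n : ℚ)) ∧
      ∀ β ∈ Φ, β - f β • α ∈ Φ) ∧
    ∀ α ∈ Φ, ∀ c : ℚ, c • α ∈ Φ → c = 1 ∨ c = -1

/-- Canonical homogeneous coordinates on `ℙ¹ = ℂ ∪ {∞}`. -/
def coordP1 : OnePoint ℂ → ℂ × ℂ :=
  fun x => Option.elim x (0, 1) fun c => (1, c)

/-- Membership in `Z`. -/
def memZ {E : Type*} [AddCommGroup E] [Module ℚ E] (Φpos : Finset E)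
    (x : Φpos → OnePoint ℂ) : Prop :=
  ∀ c : Φpos → ℚ, ∑ l : Φpos, c l • (l : E) = 0 →
    ∑ l ∈ Finset.univ.filter fun l : Φpos => c l ≠ 0,
      (c l : ℂ) * (coordP1 (x l)).2 *
        ∏ m ∈ (Finset.univ.filter fun m : Φpos => c m ≠ 0).erase l, (coordP1 (x m)).1 = 0

/-- `Fin(x)`: the set of positive roots where `x` has a finite coordinate. -/
def finSet {E : Type*} [AddCommGroup E] [Module ℚ E] (Φpos : Finset E)
    (x : Φpos → OnePoint ℂ) : Set E :=
  {l : E | ∃ h : l ∈ Φpos, x ⟨l, h⟩ ≠ OnePoint.infty}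

/-- `Ψ` is a closed root subsystem of `Θ`. -/
def IsClosedSub {E : Type*} [AddCommGroup E] (Θ Ψ : Set E) : Prop :=
  Ψ ⊆ Θ ∧ (∀ l ∈ Ψ, -l ∈ Ψ) ∧ ∀ l ∈ Ψ, ∀ m ∈ Ψ, l + m ∈ Θ → l + m ∈ Ψ

section Aux

variable {E : Type*} [AddCommGroup E] [Module ℚ E] (Φpos : Finset E)
  (x : Φpos → OnePoint ℂ)

lemma coordP1_some (c : ℂ) : coordP1 (Option.some c) = (1, c) := rfl

lemma coordP1_infty : coordP1 OnePoint.infty = (0, 1) := rfl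

lemma relAux (hx : memZ Φpos x) (a b s : Φpos)
    (hab : a ≠ b) (has : a ≠ s) (hbs : b ≠ s)
    (hsum : (a : E) + (b : E) = (s : E)) :
    (coordP1 (x a)).2 * ((coordP1 (x b)).1 * (coordP1 (x s)).1)
      + (coordP1 (x b)).2 * ((coordP1 (x a)).1 * (coordP1 (x s)).1)
      - (coordP1 (x s)).2 * ((coordP1 (x a)).1 * (coordP1 (x b)).1) = 0 := by
  have hna : a ∉ ({b, s} : Finset Φpos) := by
    simp only [Finset.mem_insert, Finset.mem_singleton]; tauto
  have hnb : b ∉ ({s} : Finset Φpos) := by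
    simp only [Finset.mem_singleton]; exact hbs
  have hna1 : a ∉ ({s} : Finset Φpos) := by
    simp only [Finset.mem_singleton]; exact has
  have hna2 : a ∉ ({b} : Finset Φpos) := by
    simp only [Finset.mem_singleton]; exact hab
  set c : Φpos → ℚ := fun l => if l = a then 1 else if l = b then 1 else if l = s then -1 else 0
    with hc
  have hca : c a = 1 := by simp [hc]
  have hcb : c b = 1 := by simp [hc, hab.symm]
  have hcs : c s = -1 := by simp [hc, has.symm, hbs.symm]
  have hrel : ∑ l : Φpos, c l • (l : E) = 0 := by
    have h1 : ∑ l : Φpos, c l • (l : E) = ∑ l ∈ ({a, b, s} : Finset Φpos), c l • (l : E) := by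
      refine (Finset.sum_subset (Finset.subset_univ _) ?_).symm
      intro l _ hl
      simp only [Finset.mem_insert, Finset.mem_singleton, not_or] at hl
      simp [hc, hl.1, hl.2.1, hl.2.2]
    rw [h1, Finset.sum_insert hna, Finset.sum_insert hnb,
      Finset.sum_singleton, hca, hcb, hcs, one_smul, one_smul, neg_one_smul, ← hsum]
    abel
  have hfil : Finset.univ.filter (fun l : Φpos => c l ≠ 0) = {a, b, s} := by
    ext l
    simp only [Finset.mem_filter, Finset.mem_univ, true_and, Finset.mem_insert,
      Finset.mem_singleton, hc]
    split_ifs with h1 h2 h3 <;> simp_all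
  have key := hx c hrel
  rw [hfil, Finset.sum_insert hna, Finset.sum_insert hnb,
    Finset.sum_singleton] at key
  have hea : ({a, b, s} : Finset Φpos).erase a = {b, s} :=
    Finset.erase_insert hna
  have heb : ({a, b, s} : Finset Φpos).erase b = {a, s} := by
    rw [Finset.erase_insert_of_ne hab, Finset.erase_insert hnb]
  have hes : ({a, b, s} : Finset Φpos).erase s = {a, b} := by
    rw [Finset.erase_insert_of_ne has, Finset.erase_insert_of_ne hbs]
    simp
  rw [hea, heb, hes, Finset.prod_insert hnb, Finset.prod_singleton,
    Finset.prod_insert hna1, Finset.prod_singleton,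
    Finset.prod_insert hna2, Finset.prod_singleton, hca, hcb, hcs] at key
  push_cast at key
  linear_combination key

lemma key1 (hx : memZ Φpos x) (a b s : Φpos)
    (hab : a ≠ b) (has : a ≠ s) (hbs : b ≠ s)
    (hsum : (a : E) + (b : E) = (s : E))
    (ha : x a ≠ OnePoint.infty) (hb : x b ≠ OnePoint.infty) : x s ≠ OnePoint.infty := by
  intro hs
  have key := relAux Φpos x hx a b s hab has hbs hsum
  obtain ⟨va, hva⟩ : ∃ v, x a = Option.some v := Option.ne_none_iff_exists'.mp ha
  obtain ⟨vb, hvb⟩ : ∃ v, x b = Option.some v := Option.ne_none_iff_exists'.mp hb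
  rw [hva, hvb, hs, coordP1_some, coordP1_some, coordP1_infty] at key
  simp at key

lemma key2 (hx : memZ Φpos x) (a b s : Φpos)
    (hab : a ≠ b) (has : a ≠ s) (hbs : b ≠ s)
    (hsum : (a : E) + (b : E) = (s : E))
    (ha : x a ≠ OnePoint.infty) (hs : x s ≠ OnePoint.infty) : x b ≠ OnePoint.infty := by
  intro hb
  have key := relAux Φpos x hx a b s hab has hbs hsum
  obtain ⟨va, hva⟩ : ∃ v, x a = Option.some v := Option.ne_none_iff_exists'.mp ha
  obtain ⟨vs, hvs⟩ : ∃ v, x s = Option.some v := Option.ne_none_iff_exists'.mp hs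
  rw [hva, hvs, hb, coordP1_some, coordP1_some, coordP1_infty] at key
  simp at key

end Aux

theorem statement1 {E : Type*} [AddCommGroup E] [Module ℚ E] [FiniteDimensional ℚ E]
    (hr : 1 ≤ Module.finrank ℚ E)
    (Φ : Set E) (hΦ : IsRootSystem Φ)
    (ℓ : E →ₗ[ℚ] ℚ) (hℓ : ∀ α ∈ Φ, ℓ α ≠ 0)
    (Φpos : Finset E) (hpos : ∀ a : E, a ∈ Φpos ↔ a ∈ Φ ∧ 0 < ℓ a)
    (x : Φpos → OnePoint ℂ) (hx : memZ Φpos x) :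
    IsClosedSub Φ (finSet Φpos x ∪ {l : E | -l ∈ finSet Φpos x}) := by
  obtain ⟨hfin, h0, hspan, hneg, hcox, hred⟩ := hΦ
  -- basic facts
  have hsubΦ : ∀ l ∈ finSet Φpos x, l ∈ Φ := fun l hl => ((hpos l).mp hl.1).1
  have hℓpos : ∀ l ∈ finSet Φpos x, 0 < ℓ l := fun l hl => ((hpos l).mp hl.1).2
  -- the addition lemma: if λ, μ ∈ Fin and λ + μ ∈ Φ then λ + μ ∈ Fin
  have addFin : ∀ l ∈ finSet Φpos x, ∀ m ∈ finSet Φpos x, l + m ∈ Φ →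
      l + m ∈ finSet Φpos x := by
    rintro l ⟨hl, hxl⟩ m ⟨hm, hxm⟩ hlm
    have hlΦ : l ∈ Φ := ((hpos l).mp hl).1
    have hℓl : 0 < ℓ l := ((hpos l).mp hl).2
    have hℓm : 0 < ℓ m := ((hpos m).mp hm).2
    have hs : l + m ∈ Φpos := (hpos _).mpr ⟨hlm, by simpa using add_pos hℓl hℓm⟩
    have hlne : l ≠ m := by
      rintro rfl
      rcases hred l hlΦ 2 (by rw [two_smul]; exact hlm) with h | h <;> norm_num at h
    have hlnes : l ≠ l + m := fun h => by
      have : ℓ m = 0 := by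
        have := congrArg ℓ h; simp [map_add] at this; linarith
      exact absurd this (ne_of_gt hℓm)
    have hmnes : m ≠ l + m := fun h => by
      have : ℓ l = 0 := by
        have := congrArg ℓ h; simp [map_add] at this; linarith
      exact absurd this (ne_of_gt hℓl)
    refine ⟨hs, key1 Φpos x hx ⟨l, hl⟩ ⟨m, hm⟩ ⟨l + m, hs⟩ ?_ ?_ ?_ rfl hxl hxm⟩
    · exact fun h => hlne (congrArg Subtype.val h)
    · exact fun h => hlnes (congrArg Subtype.val h)
    · exact fun h => hmnes (congrArg Subtype.val h)
  -- the subtraction lemma: if λ, ν ∈ Fin, λ - ν ∈ Φ and ℓ(λ-ν) > 0 then λ - ν ∈ Fin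
  have subFin : ∀ l ∈ finSet Φpos x, ∀ n ∈ finSet Φpos x, l - n ∈ Φ → 0 < ℓ (l - n) →
      l - n ∈ finSet Φpos x := by
    rintro l ⟨hl, hxl⟩ n ⟨hn, hxn⟩ hln hℓln
    have hnΦ : n ∈ Φ := ((hpos n).mp hn).1
    have hℓn : 0 < ℓ n := ((hpos n).mp hn).2
    have ha : l - n ∈ Φpos := (hpos _).mpr ⟨hln, hℓln⟩
    have hab : l - n ≠ n := by
      intro h
      have : l = (2 : ℚ) • n := by rw [two_smul]; rw [sub_eq_iff_eq_add] at h; rw [h]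
      rcases hred n hnΦ 2 (this ▸ ((hpos l).mp hl).1) with h2 | h2 <;> norm_num at h2
    have has : l - n ≠ l := fun h => by
      have : ℓ n = 0 := by
        have := congrArg ℓ h; simp [map_sub] at this; linarith
      exact absurd this (ne_of_gt hℓn)
    have hbs : n ≠ l := by
      rintro rfl
      simp at hℓln
    refine ⟨ha, key2 Φpos x hx ⟨n, hn⟩ ⟨l - n, ha⟩ ⟨l, hl⟩ ?_ ?_ ?_ (by simp) hxn hxl⟩
    · exact fun h => hab (congrArg Subtype.val h).symm
    · exact fun h => hbs (congrArg Subtype.val h)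
    · exact fun h => has (congrArg Subtype.val h)
  -- now the main statement
  refine ⟨?_, ?_, ?_⟩
  · rintro l (hl | hl)
    · exact hsubΦ l hl
    · have := hsubΦ _ hl
      simpa using hneg _ this
  · rintro l (hl | hl)
    · right; simpa using hl
    · left; exact hl
  · rintro l (hl | hl) m (hm | hm) hlm
    · exact Or.inl (addFin l hl m hm hlm)
    · -- l ∈ Fin, -m ∈ Fin; l + m = l - (-m)
      have hlm' : l - (-m) ∈ Φ := by simpa [sub_neg_eq_add] using hlm
      have hℓne : ℓ (l + m) ≠ 0 := hℓ _ hlm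
      rcases lt_or_gt_of_ne hℓne with hneg' | hpos'
      · -- ℓ(l+m) < 0 : (-m) - l = -(l+m) ∈ Φ with ℓ > 0
        right
        have h1 : (-m) - l ∈ Φ := by
          have := hneg _ hlm
          simpa [neg_add, sub_eq_add_neg, add_comm] using this
        have h2 : 0 < ℓ ((-m) - l) := by
          have : ((-m) : E) - l = -(l + m) := by abel
          rw [this, map_neg]; linarith
        have := subFin _ hm l hl h1 h2
        simpa [show ((-m) : E) - l = -(l + m) by abel] using this
      · left
        have := subFin l hl _ hm hlm' (by simpa [sub_neg_eq_add] using hpos')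
        simpa [sub_neg_eq_add] using this
    · -- -l ∈ Fin, m ∈ Fin
      have hℓne : ℓ (l + m) ≠ 0 := hℓ _ hlm
      rcases lt_or_gt_of_ne hℓne with hneg' | hpos'
      · right
        have h1 : (-l) - m ∈ Φ := by
          have := hneg _ hlm
          have e : ((-l) : E) - m = -(l + m) := by abel
          rw [e]; exact this
        have h2 : 0 < ℓ ((-l) - m) := by
          have : ((-l) : E) - m = -(l + m) := by abel
          rw [this, map_neg]; linarith
        have := subFin _ hl m hm h1 h2
        simpa [show ((-l) : E) - m = -(l + m) by abel] using this
      · left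
        have h1 : m - (-l) ∈ Φ := by simpa [sub_neg_eq_add, add_comm] using hlm
        have h2 : 0 < ℓ (m - (-l)) := by
          have : m - ((-l) : E) = l + m := by abel
          rw [this]; exact hpos'
        have := subFin m hm _ hl h1 h2
        simpa [show m - ((-l) : E) = l + m by abel] using this
    · -- both in -Fin
      right
      have h1 : (-l) + (-m) ∈ Φ := by
        have := hneg _ hlm
        have e : ((-l) : E) + (-m) = -(l + m) := by abel
        rw [e]; exact this
      have := addFin _ hl _ hm h1
      have e : -(l + m) = ((-l) : E) + (-m) := by abel
      rw [Set.mem_setOf_eq, e]; exact this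
end
end

section
/- For every x ∈ Z one has Fin(x) ∪ (−Fin(x)) = Span_ℚ(Fin(x)) ∩ Φ; consequently, Fin(x) ∪ (−Fin(x)) is a maximal closed root subsystem of Φ of rank dim_ℚ Span_ℚ(Fin(x)). (In other words, the stratification of Z by the pattern of finite coordinates is indexed by the maximal closed root subsystems of Φ.) -/
open scoped Classical
noncomputable section

/-- The embedding of the Cartan subalgebra `Hom_ℚ(E, ℂ)` into `(ℙ¹)^{Φ⁺}`. -/
def embH {E : Type*} [AddCommGroup E] [Module ℚ E] (Φpos : Finset E)
    (f : E →ₗ[ℚ] ℂ) : Φpos → OnePoint ℂ :=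
  fun l => ((f (l : E) : ℂ) : OnePoint ℂ)

/-- The rank of a subset: the dimension of its `ℚ`-linear span. -/
def rankOf {E : Type*} [AddCommGroup E] [Module ℚ E] (Ψ : Set E) : ℕ :=
  Module.finrank ℚ (Submodule.span ℚ Ψ)

/-- `Ψ` is a maximal closed root subsystem of `Θ` of rank `m`. -/
def IsMaxClosedOfRank {E : Type*} [AddCommGroup E] [Module ℚ E] (Θ Ψ : Set E) (m : ℕ) : Prop :=
  IsClosedSub Θ Ψ ∧ rankOf Ψ = m ∧
    ∀ Ψ' : Set E, IsClosedSub Θ Ψ' → rankOf Ψ' = m → Ψ ⊆ Ψ' → Ψ' = Ψ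


/-! If a positive root `a` with `x_a = ∞` were a `ℚ`-combination `a = ∑ c_l l` of roots in
`Fin(x)`, the defining relation of `Z` for `-a + ∑ c_l l = 0` would fail: since `x_a = [0 : 1]`,
every term except the one indexed by `a` contains the factor `x_{a,0} = 0`, and that term equals
`-x_{a,1} ∏ x_{l,0} = -1`. So `Fin(x)` contains every positive root of its span, whence
`Fin(x) ∪ -Fin(x) = Span(Fin(x)) ∩ Φ`. Intersecting `Φ` with a subspace always gives a closed
subsystem, and it is maximal for its rank: a closed subsystem of the same rank containing it spans
the same subspace, hence lies inside it. -/

lemma coordP1_fst_of_ne_infty {y : OnePoint ℂ} (h : y ≠ OnePoint.infty) : (coordP1 y).1 = 1 := by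
  cases y with
  | infty => exact absurd rfl h
  | coe c => rfl

section Z

variable {E : Type*} [AddCommGroup E] [Module ℚ E] {Φpos : Finset E} {x : Φpos → OnePoint ℂ}

lemma memZ.coeff_eq_zero_of_infty (hx : memZ Φpos x) {c : Φpos → ℚ}
    (hc : ∑ l : Φpos, c l • (l : E) = 0) {a : Φpos} (ha : x a = OnePoint.infty)
    (hfin : ∀ l ≠ a, c l ≠ 0 → x l ≠ OnePoint.infty) : c a = 0 := by
  by_contra hca
  set T := Finset.univ.filter fun l : Φpos => c l ≠ 0
  have haT : a ∈ T := Finset.mem_filter.mpr ⟨Finset.mem_univ a, hca⟩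
  have hrel := hx c hc
  rw [Finset.sum_eq_single_of_mem a haT] at hrel
  · have hprod : ∏ m ∈ T.erase a, (coordP1 (x m)).1 = 1 :=
      Finset.prod_eq_one fun m hm => coordP1_fst_of_ne_infty <|
        hfin m (Finset.ne_of_mem_erase hm) (Finset.mem_filter.mp (Finset.mem_of_mem_erase hm)).2
    rw [hprod, ha] at hrel
    exact hca (by simpa [coordP1, OnePoint.infty] using hrel)
  · intro l _ hla
    rw [Finset.prod_eq_zero (Finset.mem_erase.mpr ⟨Ne.symm hla, haT⟩) (by rw [ha]; rfl), mul_zero]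

lemma finSet_subset : finSet Φpos x ⊆ Φpos := fun _ hl => hl.1

lemma memZ.ne_infty_of_mem_span (hx : memZ Φpos x) (a : Φpos)
    (hspan : (a : E) ∈ Submodule.span ℚ (finSet Φpos x)) : x a ≠ OnePoint.infty := by
  by_contra! hxa
  obtain ⟨f, hfS, hfa⟩ := Submodule.mem_span_set.mp hspan
  have hf_sum : ∑ l : Φpos, f l • (l : E) = a := by
    have hsupp : f.support ⊆ Φpos := by exact_mod_cast hfS.trans finSet_subset
    rw [Finset.sum_coe_sort Φpos (fun e => f e • e), ← hfa,
      Finsupp.sum_of_support_subset f hsupp (fun e r => r • e) fun _ _ => zero_smul ℚ _]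
  have hfa0 : f a = 0 :=
    Finsupp.notMem_support_iff.mp fun h => (hfS h).2 hxa
  let c : Φpos → ℚ := fun l => f l - if l = a then 1 else 0
  have hc : ∑ l : Φpos, c l • (l : E) = 0 := by
    simp only [c, sub_smul, Finset.sum_sub_distrib, hf_sum, ite_smul, one_smul, zero_smul,
      Finset.sum_ite_eq', Finset.mem_univ, if_true, sub_self]
  have hca : c a ≠ 0 := by simp [c, hfa0]
  refine hca (hx.coeff_eq_zero_of_infty hc hxa fun l hl hcl => ?_)
  have hfl : f l ≠ 0 := by simpa [c, hl] using hcl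
  exact (hfS (Finsupp.mem_support_iff.mpr hfl)).2

end Z

section ClosedSubsystems

variable {E : Type*} [AddCommGroup E]

lemma isClosedSub_inter {R : Type*} [Ring R] [Module R E] {Φ : Set E}
    (hneg : ∀ α ∈ Φ, -α ∈ Φ) (V : Submodule R E) : IsClosedSub Φ (↑V ∩ Φ) :=
  ⟨Set.inter_subset_right, fun _ hl => ⟨V.neg_mem hl.1, hneg _ hl.2⟩,
    fun _ hl _ hm hlm => ⟨V.add_mem hl.1 hm.1, hlm⟩⟩

lemma span_span_inter_eq {R : Type*} [Ring R] [Module R E] {Φ S : Set E} (hSΦ : S ⊆ Φ) :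
    Submodule.span R (↑(Submodule.span R S) ∩ Φ) = Submodule.span R S :=
  Submodule.span_eq_of_le _ Set.inter_subset_left
    (Submodule.span_mono (Set.subset_inter Submodule.subset_span hSΦ))

variable [Module ℚ E]

lemma isMaxClosedOfRank_span_inter {Φ : Set E} (hΦ : Φ.Finite) (hneg : ∀ α ∈ Φ, -α ∈ Φ)
    {S : Set E} (hSΦ : S ⊆ Φ) :
    IsMaxClosedOfRank Φ (↑(Submodule.span ℚ S) ∩ Φ) (Module.finrank ℚ (Submodule.span ℚ S)) := by
  have hspan := span_span_inter_eq (R := ℚ) hSΦ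
  refine ⟨isClosedSub_inter hneg _, by rw [rankOf, hspan], fun Ψ hΨ hrank hsub => ?_⟩
  have : FiniteDimensional ℚ (Submodule.span ℚ Ψ) :=
    FiniteDimensional.span_of_finite ℚ (hΦ.subset hΨ.1)
  have hle : Submodule.span ℚ S ≤ Submodule.span ℚ Ψ := hspan ▸ Submodule.span_mono hsub
  have heq := Submodule.eq_of_le_of_finrank_eq hle hrank.symm
  exact hsub.antisymm' fun l hl => ⟨heq ▸ Submodule.subset_span hl, hΨ.1 hl⟩

lemma union_neg_eq_span_inter {Φ : Set E} (hneg : ∀ α ∈ Φ, -α ∈ Φ) {ℓ : E →ₗ[ℚ] ℚ}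
    (hℓ : ∀ α ∈ Φ, ℓ α ≠ 0) {Φpos : Set E} (hpos : ∀ a, a ∈ Φpos ↔ a ∈ Φ ∧ 0 < ℓ a)
    {S : Set E} (hS : S ⊆ Φpos) (hclosed : ∀ a ∈ Φpos, a ∈ Submodule.span ℚ S → a ∈ S) :
    S ∪ {l | -l ∈ S} = ↑(Submodule.span ℚ S) ∩ Φ := by
  have hSΦ : S ⊆ Φ := fun l hl => ((hpos l).mp (hS hl)).1
  apply Set.Subset.antisymm
  · rintro l (hl | hl)
    · exact ⟨Submodule.subset_span hl, hSΦ hl⟩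
    · exact ⟨by simpa using (Submodule.span ℚ S).neg_mem (Submodule.subset_span hl),
        by simpa using hneg _ (hSΦ hl)⟩
  · rintro l ⟨hl, hlΦ⟩
    rcases (hℓ l hlΦ).lt_or_gt with hlt | hgt
    · exact Or.inr <| hclosed _ ((hpos _).mpr ⟨hneg l hlΦ, by simpa using hlt⟩)
        ((Submodule.span ℚ S).neg_mem hl)
    · exact Or.inl <| hclosed l ((hpos l).mpr ⟨hlΦ, hgt⟩) hl

end ClosedSubsystems

theorem statement4_general {E : Type*} [AddCommGroup E] [Module ℚ E]
    (Φ : Set E) (hΦ : IsRootSystem Φ)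
    (ℓ : E →ₗ[ℚ] ℚ) (hℓ : ∀ α ∈ Φ, ℓ α ≠ 0)
    (Φpos : Finset E) (hpos : ∀ a : E, a ∈ Φpos ↔ a ∈ Φ ∧ 0 < ℓ a)
    (x : Φpos → OnePoint ℂ) (hx : memZ Φpos x) :
    finSet Φpos x ∪ {l : E | -l ∈ finSet Φpos x}
        = (Submodule.span ℚ (finSet Φpos x) : Set E) ∩ Φ
    ∧ IsMaxClosedOfRank Φ (finSet Φpos x ∪ {l : E | -l ∈ finSet Φpos x})
        (Module.finrank ℚ (Submodule.span ℚ (finSet Φpos x))) := by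
  have hneg : ∀ α ∈ Φ, -α ∈ Φ := hΦ.2.2.2.1
  have hstrata := union_neg_eq_span_inter hneg hℓ (Φpos := Φpos) (by simpa using hpos)
    finSet_subset fun a ha hspan => ⟨ha, hx.ne_infty_of_mem_span ⟨a, ha⟩ hspan⟩
  refine ⟨hstrata, ?_⟩
  rw [hstrata]
  exact isMaxClosedOfRank_span_inter hΦ.1 hneg fun l hl => ((hpos l).mp hl.1).1

theorem statement4 {E : Type*} [AddCommGroup E] [Module ℚ E] [FiniteDimensional ℚ E]
    (hr : 1 ≤ Module.finrank ℚ E)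
    (Φ : Set E) (hΦ : IsRootSystem Φ)
    (ℓ : E →ₗ[ℚ] ℚ) (hℓ : ∀ α ∈ Φ, ℓ α ≠ 0)
    (Φpos : Finset E) (hpos : ∀ a : E, a ∈ Φpos ↔ a ∈ Φ ∧ 0 < ℓ a)
    (x : Φpos → OnePoint ℂ) (hx : memZ Φpos x) :
    finSet Φpos x ∪ {l : E | -l ∈ finSet Φpos x}
        = (Submodule.span ℚ (finSet Φpos x) : Set E) ∩ Φ
    ∧ IsMaxClosedOfRank Φ (finSet Φpos x ∪ {l : E | -l ∈ finSet Φpos x})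
        (Module.finrank ℚ (Submodule.span ℚ (finSet Φpos x))) :=
  statement4_general Φ hΦ ℓ hℓ Φpos hpos x hx
end
end

section
/- Let Φ′ be a good root subsystem of Φ and let c : Φ⁺ → ℚ be a function with ∑_{λ∈Φ⁺} c_λ·λ = 0 in E. Then either supp(c) ⊆ Φ′, or supp(c) contains at least two elements that do not lie in Φ′, where supp(c) := {λ ∈ Φ⁺ : c_λ ≠ 0}. -/
open scoped Classical
noncomputable section

theorem statement8 {E : Type*} [AddCommGroup E] [Module ℚ E] [FiniteDimensional ℚ E]
    (hr : 1 ≤ Module.finrank ℚ E)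
    (Φ : Set E) (hΦ : IsRootSystem Φ)
    (ℓ : E →ₗ[ℚ] ℚ) (hℓ : ∀ α ∈ Φ, ℓ α ≠ 0)
    (Φpos : Finset E) (hpos : ∀ a : E, a ∈ Φpos ↔ a ∈ Φ ∧ 0 < ℓ a)
    (Φ' : Set E) (hgood : IsMaxClosedOfRank Φ Φ' (Module.finrank ℚ E - 1))
    (c : E → ℚ) (hc : ∑ l ∈ Φpos, c l • l = 0) :
    (∀ l ∈ Φpos, c l ≠ 0 → l ∈ Φ') ∨
      ∃ l m : E, l ∈ Φpos ∧ m ∈ Φpos ∧ c l ≠ 0 ∧ c m ≠ 0 ∧ l ≠ m ∧ l ∉ Φ' ∧ m ∉ Φ' := by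
  by_cases hall : ∀ l ∈ Φpos, c l ≠ 0 → l ∈ Φ'
  · exact Or.inl hall
  push_neg at hall
  obtain ⟨l, hlpos, hcl, hlΦ'⟩ := hall
  right
  by_contra hno
  push_neg at hno
  set S := Submodule.span ℚ Φ' with hS
  -- every other support element lies in Φ'
  have hsum : c l • l + ∑ m ∈ Φpos.erase l, c m • m = 0 := by
    rw [Finset.add_sum_erase Φpos (fun m => c m • m) hlpos]; exact hc
  have hmem : c l • l ∈ S := by
    have heq : c l • l = -∑ m ∈ Φpos.erase l, c m • m :=
      eq_neg_of_add_eq_zero_left hsum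
    rw [heq]
    refine Submodule.neg_mem _ (Submodule.sum_mem _ fun m hm => ?_)
    by_cases hcm : c m = 0
    · simp [hcm]
    · have hmpos := Finset.mem_of_mem_erase hm
      have hne : l ≠ m := fun h => ((Finset.mem_erase.mp hm).1 h.symm)
      exact Submodule.smul_mem _ _
        (Submodule.subset_span (hno l m hlpos hmpos hcl hcm hne hlΦ'))
  have hlS : l ∈ S := by
    have := Submodule.smul_mem S (c l)⁻¹ hmem
    rwa [smul_smul, inv_mul_cancel₀ hcl, one_smul] at this
  -- consider Ψ' := Φ ∩ S
  set Ψ' : Set E := Φ ∩ (S : Set E) with hΨ'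
  have hΦ'sub : Φ' ⊆ Ψ' := fun x hx => ⟨hgood.1.1 hx, Submodule.subset_span hx⟩
  have hclosed : IsClosedSub Φ Ψ' := by
    refine ⟨Set.inter_subset_left, fun a ha => ⟨hΦ.2.2.2.1 a ha.1, S.neg_mem ha.2⟩,
      fun a ha b hb hab => ⟨hab, S.add_mem ha.2 hb.2⟩⟩
  have hspan : Submodule.span ℚ Ψ' = Submodule.span ℚ Φ' :=
    le_antisymm (Submodule.span_le.mpr fun x hx => hx.2) (Submodule.span_mono hΦ'sub)
  have hrank : rankOf Ψ' = Module.finrank ℚ E - 1 := by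
    unfold rankOf
    rw [hspan]
    exact hgood.2.1
  have heq := hgood.2.2 Ψ' hclosed hrank hΦ'sub
  apply hlΦ'
  rw [← heq]
  exact ⟨((hpos l).mp hlpos).1, hlS⟩
end
end

section
/- For every integer k with 0 ≤ k ≤ r, a subset Ψ ⊆ Φ is a k-step good root subsystem of Φ if and only if Ψ is a maximal closed root subsystem of Φ of rank r − k. -/
open scoped Classical
noncomputable section

/-- A good root subsystem of `Θ`: a maximal closed root subsystem of rank `rank(Θ) − 1`. -/
def IsGoodSubOf {E : Type*} [AddCommGroup E] [Module ℚ E] (Θ Ψ : Set E) : Prop :=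
  IsMaxClosedOfRank Θ Ψ (rankOf Θ - 1)

/-- `k`-step good root subsystems of `Φ`, defined inductively: `Φ` itself is the unique
`0`-step good root subsystem, and a `(k+1)`-step good root subsystem is a good root
subsystem of some `k`-step good root subsystem. -/
def IsKStepGood {E : Type*} [AddCommGroup E] [Module ℚ E] (Φ : Set E) :
    ℕ → Set E → Prop
  | 0, Ψ => Ψ = Φ
  | k + 1, Ψ => ∃ Θ : Set E, IsKStepGood Φ k Θ ∧ IsGoodSubOf Θ Ψ

/-!
A closed subsystem `Ψ` that is maximal of rank `m` in `Φ` is cut out by its span: `Ψ = Φ ∩ span Ψ`.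
Going down, a good subsystem `Ψ` of a maximal `Θ` of rank `m + 1` is maximal in `Φ`: any closed
`Ψ' ⊇ Ψ` of the same rank has the same span, hence lies in `Φ ∩ span Θ = Θ`, where maximality of
`Ψ` in `Θ` applies. Going up, if `rank Ψ < rank Φ`, pick a root `α ∉ span Ψ`; then
`Φ ∩ span (Ψ ∪ {α})` is closed of rank `rank Ψ + 1`, and since `Φ` is finite it lies in a maximal
closed subsystem `Θ` of that rank, in which `Ψ` is good. Induction on `k` gives the theorem.
-/

open Submodule

section ClosedSub

variable {E : Type*} [AddCommGroup E] {Φ Θ Ψ : Set E}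

lemma IsClosedSub.refl (hneg : ∀ α ∈ Φ, -α ∈ Φ) : IsClosedSub Φ Φ :=
  ⟨subset_rfl, hneg, fun _ _ _ _ h => h⟩

lemma IsClosedSub.trans (hΘ : IsClosedSub Φ Θ) (hΨ : IsClosedSub Θ Ψ) : IsClosedSub Φ Ψ :=
  ⟨hΨ.1.trans hΘ.1, hΨ.2.1, fun l hl m hm h =>
    hΨ.2.2 l hl m hm (hΘ.2.2 l (hΨ.1 hl) m (hΨ.1 hm) h)⟩

lemma IsClosedSub.of_subset (hΨ : IsClosedSub Φ Ψ) (hΘ : Θ ⊆ Φ) (hΨΘ : Ψ ⊆ Θ) :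
    IsClosedSub Θ Ψ :=
  ⟨hΨΘ, hΨ.2.1, fun l hl m hm h => hΨ.2.2 l hl m hm (hΘ h)⟩

lemma isClosedSub_inter_submodule [Module ℚ E] (hneg : ∀ α ∈ Φ, -α ∈ Φ) (V : Submodule ℚ E) :
    IsClosedSub Φ (Φ ∩ V) :=
  ⟨Set.inter_subset_left, fun l hl => ⟨hneg l hl.1, V.neg_mem hl.2⟩,
    fun _ hl _ hm h => ⟨h, V.add_mem hl.2 hm.2⟩⟩

end ClosedSub

section MaxClosed

variable {E : Type*} [AddCommGroup E] [Module ℚ E] {Φ Θ Ψ : Set E} {m : ℕ}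

lemma span_inter_span_eq {s : Set E} (hs : s ⊆ Φ) : span ℚ (Φ ∩ span ℚ s) = span ℚ s :=
  le_antisymm (span_le.2 fun _ hx => hx.2) (span_mono fun _ hx => ⟨hs hx, subset_span hx⟩)

lemma IsMaxClosedOfRank.inter_span_eq (hneg : ∀ α ∈ Φ, -α ∈ Φ) (hΘ : IsMaxClosedOfRank Φ Θ m) :
    Φ ∩ span ℚ Θ = Θ :=
  hΘ.2.2 _ (isClosedSub_inter_submodule hneg _)
    (by rw [rankOf, span_inter_span_eq hΘ.1.1]; exact hΘ.2.1) fun _ hx => ⟨hΘ.1.1 hx, subset_span hx⟩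

lemma IsMaxClosedOfRank.of_subset (hΨ : IsMaxClosedOfRank Φ Ψ m) (hΘ : IsClosedSub Φ Θ)
    (hΨΘ : Ψ ⊆ Θ) : IsMaxClosedOfRank Θ Ψ m :=
  ⟨hΨ.1.of_subset hΘ.1 hΨΘ, hΨ.2.1, fun Ψ' hΨ' hr hsub => hΨ.2.2 Ψ' (hΘ.trans hΨ') hr hsub⟩

lemma isMaxClosedOfRank_rankOf_self_iff (hneg : ∀ α ∈ Φ, -α ∈ Φ) :
    IsMaxClosedOfRank Φ Ψ (rankOf Φ) ↔ Ψ = Φ := by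
  constructor
  · intro h
    exact (h.2.2 Φ (.refl hneg) rfl h.1.1).symm
  · rintro rfl
    exact ⟨.refl hneg, rfl, fun _ h _ hsub => h.1.antisymm hsub⟩

lemma exists_isMaxClosedOfRank_superset (hfin : Φ.Finite) (hΘ : IsClosedSub Φ Θ) :
    ∃ Θ', Θ ⊆ Θ' ∧ IsMaxClosedOfRank Φ Θ' (rankOf Θ) := by
  let S : Set (Set E) := {Θ' | IsClosedSub Φ Θ' ∧ rankOf Θ' = rankOf Θ}
  have hS : S.Finite := hfin.finite_subsets.subset fun _ h => h.1.1
  obtain ⟨Θ', hΘΘ', hmax⟩ := hS.exists_le_maximal (a := Θ) ⟨hΘ, rfl⟩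
  exact ⟨Θ', hΘΘ', hmax.prop.1, hmax.prop.2,
    fun _ hc hr hsub => hmax.eq_of_superset ⟨hc, hr⟩ hsub⟩

variable [FiniteDimensional ℚ E]

lemma exists_isClosedSub_rankOf_eq_succ (hneg : ∀ α ∈ Φ, -α ∈ Φ) (hΨ : Ψ ⊆ Φ)
    (hr : rankOf Ψ < rankOf Φ) :
    ∃ Θ, IsClosedSub Φ Θ ∧ Ψ ⊆ Θ ∧ rankOf Θ = rankOf Ψ + 1 := by
  obtain ⟨α, hαΦ, hαΨ⟩ : ∃ α ∈ Φ, α ∉ span ℚ Ψ := by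
    by_contra! h
    exact hr.not_ge (finrank_mono (span_le.2 h))
  refine ⟨Φ ∩ span ℚ (insert α Ψ), isClosedSub_inter_submodule hneg _,
    fun _ hx => ⟨hΨ hx, subset_span (Set.mem_insert_of_mem _ hx)⟩, ?_⟩
  rw [rankOf, span_inter_span_eq (Set.insert_subset hαΦ hΨ), span_insert, sup_comm,
    finrank_sup_span_singleton hαΨ, rankOf]

lemma IsMaxClosedOfRank.of_isGoodSubOf (hneg : ∀ α ∈ Φ, -α ∈ Φ)
    (hΘ : IsMaxClosedOfRank Φ Θ m) (hΨ : IsGoodSubOf Θ Ψ) : IsMaxClosedOfRank Φ Ψ (m - 1) := by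
  rw [IsGoodSubOf, hΘ.2.1] at hΨ
  refine ⟨hΘ.1.trans hΨ.1, hΨ.2.1, fun Ψ' hΨ' hr hsub => ?_⟩
  have hspan : span ℚ Ψ = span ℚ Ψ' :=
    eq_of_le_of_finrank_eq (span_mono hsub) (hΨ.2.1.trans hr.symm)
  have hΨ'Θ : Ψ' ⊆ Θ := fun x hx => hΘ.inter_span_eq hneg ▸
    ⟨hΨ'.1 hx, span_mono hΨ.1.1 (hspan ▸ subset_span hx)⟩
  exact hΨ.2.2 Ψ' (hΨ'.of_subset hΘ.1.1 hΨ'Θ) hr hsub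

lemma IsMaxClosedOfRank.exists_isGoodSubOf (hfin : Φ.Finite) (hneg : ∀ α ∈ Φ, -α ∈ Φ)
    (hΨ : IsMaxClosedOfRank Φ Ψ m) (hm : m < rankOf Φ) :
    ∃ Θ, IsMaxClosedOfRank Φ Θ (m + 1) ∧ IsGoodSubOf Θ Ψ := by
  obtain ⟨Θ₀, hΘ₀, hΨΘ₀, hrank⟩ := exists_isClosedSub_rankOf_eq_succ hneg hΨ.1.1 (hΨ.2.1 ▸ hm)
  obtain ⟨Θ, hΘ₀Θ, hΘ⟩ := exists_isMaxClosedOfRank_superset hfin hΘ₀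
  rw [hrank, hΨ.2.1] at hΘ
  refine ⟨Θ, hΘ, ?_⟩
  rw [IsGoodSubOf, hΘ.2.1, Nat.add_sub_cancel]
  exact hΨ.of_subset hΘ.1 (hΨΘ₀.trans hΘ₀Θ)

theorem isKStepGood_iff (hfin : Φ.Finite) (hneg : ∀ α ∈ Φ, -α ∈ Φ) {k : ℕ}
    (hk : k ≤ rankOf Φ) : IsKStepGood Φ k Ψ ↔ IsMaxClosedOfRank Φ Ψ (rankOf Φ - k) := by
  induction k generalizing Ψ with
  | zero => exact (isMaxClosedOfRank_rankOf_self_iff hneg).symm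
  | succ k ih =>
    constructor
    · rintro ⟨Θ, hΘ, hΨ⟩
      simpa only [Nat.sub_sub] using ((ih (by omega)).1 hΘ).of_isGoodSubOf hneg hΨ
    · intro hΨ
      obtain ⟨Θ, hΘ, hΨΘ⟩ := hΨ.exists_isGoodSubOf hfin hneg (by omega)
      have hrank : rankOf Φ - (k + 1) + 1 = rankOf Φ - k := by omega
      exact ⟨Θ, (ih (by omega)).2 (hrank ▸ hΘ), hΨΘ⟩

end MaxClosed

theorem statement9_general {E : Type*} [AddCommGroup E] [Module ℚ E] [FiniteDimensional ℚ E]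
    (Φ : Set E) (hΦ : IsRootSystem Φ)
    (k : ℕ) (hk : k ≤ Module.finrank ℚ E) (Ψ : Set E) :
    IsKStepGood Φ k Ψ ↔ IsMaxClosedOfRank Φ Ψ (Module.finrank ℚ E - k) := by
  obtain ⟨hfin, -, hspan, hneg, -⟩ := hΦ
  have hrank : rankOf Φ = Module.finrank ℚ E := by rw [rankOf, hspan, finrank_top]
  rw [← hrank] at hk ⊢
  exact isKStepGood_iff hfin hneg hk

theorem statement9 {E : Type*} [AddCommGroup E] [Module ℚ E] [FiniteDimensional ℚ E]
    (hr : 1 ≤ Module.finrank ℚ E)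
    (Φ : Set E) (hΦ : IsRootSystem Φ)
    (k : ℕ) (hk : k ≤ Module.finrank ℚ E) (Ψ : Set E) :
    IsKStepGood Φ k Ψ ↔ IsMaxClosedOfRank Φ Ψ (Module.finrank ℚ E - k) :=
  statement9_general Φ hΦ k hk Ψ
end
end

section
/- The map G : Ψ ↦ Ψ^⊥ := {φ ∈ E* : φ(λ) = 0 for every λ ∈ Ψ} is a bijection from the set of all maximal closed root subsystems of Φ (of all ranks) onto the intersection lattice L(𝒜) := { {φ ∈ E* : φ(λ) = 0 for all λ ∈ S} : S ⊆ Φ } of the Coxeter arrangement; its inverse sends X ∈ L(𝒜) to the set {λ ∈ Φ : φ(λ) = 0 for every φ ∈ X}. Moreover, for maximal closed root subsystems Ψ, Ψ′ one has Ψ ⊆ Ψ′ if and only if Ψ^⊥ ⊇ Ψ′^⊥, and the codimension of Ψ^⊥ in E* equals the rank of Ψ. -/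
open scoped Classical
noncomputable section

/-- The annihilator `S^⊥ = {φ ∈ E* : φ(λ) = 0 for all λ ∈ S}` of a subset `S ⊆ E`. -/
def perpSet {E : Type*} [AddCommGroup E] [Module ℚ E] (S : Set E) :
    Set (Module.Dual ℚ E) :=
  {φ : Module.Dual ℚ E | ∀ l ∈ S, φ l = 0}


section Aux
variable {E : Type*} [AddCommGroup E] [Module ℚ E]

lemma perpSet_eq_ann (S : Set E) :
    perpSet S = ((Submodule.span ℚ S).dualAnnihilator : Set (Module.Dual ℚ E)) := by
  ext φ
  simp only [perpSet, Set.mem_setOf_eq, SetLike.mem_coe, Submodule.mem_dualAnnihilator]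
  constructor
  · intro h l hl
    have : Submodule.span ℚ S ≤ LinearMap.ker φ :=
      Submodule.span_le.mpr (fun x hx => h x hx)
    exact this hl
  · intro h l hl
    exact h l (Submodule.subset_span hl)

variable [FiniteDimensional ℚ E]

lemma inter_span_closed {Φ : Set E} (hΦ : IsRootSystem Φ) (W : Submodule ℚ E) :
    IsClosedSub Φ (Φ ∩ (W : Set E)) := by
  refine ⟨Set.inter_subset_left, fun l hl => ⟨hΦ.2.2.2.1 l hl.1, W.neg_mem hl.2⟩,
    fun l hl m hm hsum => ⟨hsum, W.add_mem hl.2 hm.2⟩⟩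

lemma max_eq_inter_span {Φ Ψ : Set E} (hΦ : IsRootSystem Φ)
    (h : IsMaxClosedOfRank Φ Ψ (rankOf Ψ)) :
    Ψ = Φ ∩ (Submodule.span ℚ Ψ : Set E) := by
  have hsub : Ψ ⊆ Φ ∩ (Submodule.span ℚ Ψ : Set E) :=
    fun l hl => ⟨h.1.1 hl, Submodule.subset_span hl⟩
  have hspan : Submodule.span ℚ (Φ ∩ (Submodule.span ℚ Ψ : Set E)) = Submodule.span ℚ Ψ := by
    apply le_antisymm
    · exact Submodule.span_le.mpr fun x hx => hx.2
    · exact Submodule.span_mono hsub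
  have := h.2.2 (Φ ∩ (Submodule.span ℚ Ψ : Set E)) (inter_span_closed hΦ _)
    (by unfold rankOf; rw [hspan]) hsub
  exact this.symm

lemma inter_span_max {Φ : Set E} (hΦ : IsRootSystem Φ) (S : Set E) (hS : S ⊆ Φ) :
    IsMaxClosedOfRank Φ (Φ ∩ (Submodule.span ℚ S : Set E))
      (rankOf (Φ ∩ (Submodule.span ℚ S : Set E))) := by
  set Ψ := Φ ∩ (Submodule.span ℚ S : Set E) with hΨ
  have hspan : Submodule.span ℚ Ψ = Submodule.span ℚ S := by
    apply le_antisymm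
    · exact Submodule.span_le.mpr fun x hx => hx.2
    · exact Submodule.span_mono (fun x hx => ⟨hS hx, Submodule.subset_span hx⟩)
  refine ⟨inter_span_closed hΦ _, rfl, fun Ψ' hΨ' hrk hsub => ?_⟩
  have hsp' : Submodule.span ℚ Ψ' = Submodule.span ℚ Ψ := by
    refine (Submodule.eq_of_le_of_finrank_le (Submodule.span_mono hsub) ?_).symm
    simpa [rankOf] using hrk.le
  apply Set.Subset.antisymm _ hsub
  intro x hx
  refine ⟨hΨ'.1 hx, ?_⟩
  have : x ∈ Submodule.span ℚ Ψ := hsp' ▸ Submodule.subset_span hx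
  rw [hspan] at this
  exact this

lemma inv_eq {Φ Ψ : Set E} (hΦ : IsRootSystem Φ)
    (h : IsMaxClosedOfRank Φ Ψ (rankOf Ψ)) :
    {l : E | l ∈ Φ ∧ ∀ φ ∈ perpSet Ψ, φ l = 0} = Ψ := by
  conv_rhs => rw [max_eq_inter_span hΦ h]
  ext l
  simp only [Set.mem_setOf_eq, Set.mem_inter_iff, SetLike.mem_coe, perpSet_eq_ann,
    SetLike.mem_coe]
  refine and_congr_right fun _ => ?_
  exact Subspace.forall_mem_dualAnnihilator_apply_eq_zero_iff (Submodule.span ℚ Ψ) l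

end Aux

theorem statement12 {E : Type*} [AddCommGroup E] [Module ℚ E] [FiniteDimensional ℚ E]
    (hr : 1 ≤ Module.finrank ℚ E)
    (Φ : Set E) (hΦ : IsRootSystem Φ) :
    -- `G : Ψ ↦ Ψ^⊥` is a bijection from the maximal closed root subsystems (of all ranks)
    -- onto the intersection lattice of the Coxeter arrangement
    Set.BijOn (perpSet (E := E))
      {Ψ : Set E | IsMaxClosedOfRank Φ Ψ (rankOf Ψ)}
      {X : Set (Module.Dual ℚ E) | ∃ S : Set E, S ⊆ Φ ∧ X = perpSet S} ∧
    -- the inverse sends `X` to `{λ ∈ Φ : φ(λ) = 0 for all φ ∈ X}`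
    (∀ Ψ : Set E, IsMaxClosedOfRank Φ Ψ (rankOf Ψ) →
      {l : E | l ∈ Φ ∧ ∀ φ ∈ perpSet Ψ, φ l = 0} = Ψ) ∧
    (∀ X : Set (Module.Dual ℚ E), (∃ S : Set E, S ⊆ Φ ∧ X = perpSet S) →
      perpSet {l : E | l ∈ Φ ∧ ∀ φ ∈ X, φ l = 0} = X) ∧
    -- order reversal
    (∀ Ψ Ψ' : Set E, IsMaxClosedOfRank Φ Ψ (rankOf Ψ) →
      IsMaxClosedOfRank Φ Ψ' (rankOf Ψ') →
      (Ψ ⊆ Ψ' ↔ perpSet Ψ' ⊆ perpSet Ψ)) ∧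
    -- the codimension of `Ψ^⊥` in `E*` equals the rank of `Ψ`
    (∀ Ψ : Set E, IsMaxClosedOfRank Φ Ψ (rankOf Ψ) →
      Module.finrank ℚ (Module.Dual ℚ E)
        = Module.finrank ℚ (Submodule.span ℚ (perpSet Ψ)) + rankOf Ψ) := by
  obtain ⟨hfin, h0, hspanΦ, hneg, hco, hred⟩ := hΦ
  have hΦ' : IsRootSystem Φ := ⟨hfin, h0, hspanΦ, hneg, hco, hred⟩
  refine ⟨⟨?_, ?_, ?_⟩, fun Ψ h => inv_eq hΦ' h, ?_, ?_, ?_⟩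
  · -- maps to
    intro Ψ hΨ
    exact ⟨Ψ, hΨ.1.1, rfl⟩
  · -- injective
    intro Ψ hΨ Ψ' hΨ' heq
    rw [← inv_eq hΦ' hΨ, ← inv_eq hΦ' hΨ', heq]
  · -- surjective
    rintro X ⟨S, hS, rfl⟩
    refine ⟨Φ ∩ (Submodule.span ℚ S : Set E), inter_span_max hΦ' S hS, ?_⟩
    have hspan : Submodule.span ℚ (Φ ∩ (Submodule.span ℚ S : Set E)) = Submodule.span ℚ S := by
      apply le_antisymm
      · exact Submodule.span_le.mpr fun x hx => hx.2
      · exact Submodule.span_mono (fun x hx => ⟨hS hx, Submodule.subset_span hx⟩)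
    rw [perpSet_eq_ann, perpSet_eq_ann, hspan]
  · -- inverse on lattice side
    rintro X ⟨S, hS, rfl⟩
    have h1 : {l : E | l ∈ Φ ∧ ∀ φ ∈ perpSet S, φ l = 0} = Φ ∩ (Submodule.span ℚ S : Set E) := by
      ext l
      simp only [Set.mem_setOf_eq, Set.mem_inter_iff, SetLike.mem_coe, perpSet_eq_ann]
      exact and_congr_right fun _ =>
        Subspace.forall_mem_dualAnnihilator_apply_eq_zero_iff (Submodule.span ℚ S) l
    have h2 : Submodule.span ℚ (Φ ∩ (Submodule.span ℚ S : Set E)) = Submodule.span ℚ S := by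
      apply le_antisymm
      · exact Submodule.span_le.mpr fun x hx => hx.2
      · exact Submodule.span_mono (fun x hx => ⟨hS hx, Submodule.subset_span hx⟩)
    rw [h1, perpSet_eq_ann, perpSet_eq_ann, h2]
  · -- order reversal
    intro Ψ Ψ' hΨ hΨ'
    constructor
    · intro hsub φ hφ l hl
      exact hφ l (hsub hl)
    · intro hperp
      have : (Submodule.span ℚ Ψ').dualAnnihilator ≤ (Submodule.span ℚ Ψ).dualAnnihilator := by
        intro φ hφ
        have := hperp (by rw [perpSet_eq_ann]; exact hφ : φ ∈ perpSet Ψ')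
        rw [perpSet_eq_ann] at this
        exact this
      have hle : Submodule.span ℚ Ψ ≤ Submodule.span ℚ Ψ' :=
        Subspace.dualAnnihilator_le_dualAnnihilator_iff.mp this
      rw [max_eq_inter_span hΦ' hΨ, max_eq_inter_span hΦ' hΨ']
      exact fun x hx => ⟨hx.1, hle hx.2⟩
  · -- codimension
    intro Ψ hΨ
    have h1 : Submodule.span ℚ (perpSet Ψ) = (Submodule.span ℚ Ψ).dualAnnihilator := by
      rw [perpSet_eq_ann, Submodule.span_eq]
    rw [h1, Subspace.dual_finrank_eq, rankOf]
    have h2 := Submodule.finrank_quotient_add_finrank (Submodule.span ℚ Ψ)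
    have h3 : Module.finrank ℚ (E ⧸ Submodule.span ℚ Ψ)
        = Module.finrank ℚ (Submodule.span ℚ Ψ).dualAnnihilator :=
      LinearEquiv.finrank_eq (Subspace.quotEquivAnnihilator (Submodule.span ℚ Ψ))
    omega
end
end

section
/- For every integer k with 0 ≤ k ≤ r, the number of maximal closed root subsystems of Φ of rank r − k equals S(r + 1, k + 1). (These counts are the Betti numbers of the wonderful compactification of a Cartan subalgebra of 𝔰𝔩_{r+1}.) -/
open scoped Classical
noncomputable section

/-- The root system of type `A_r`: the vectors `e_i − e_j`, `i ≠ j`, in `ℚ^{r+1}`. -/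
def typeA (r : ℕ) : Set (Fin (r + 1) → ℚ) :=
  {v | ∃ i j : Fin (r + 1), i ≠ j ∧ v = Pi.single i 1 - Pi.single j 1}

/-- The Stirling number of the second kind `S(n, k)`: the number of partitions of an
`n`-element set into exactly `k` nonempty blocks. -/
def stirling2 (n k : ℕ) : ℕ :=
  Nat.card {P : Finpartition (Finset.univ : Finset (Fin n)) // P.parts.card = k}

/-!
A closed subsystem `Ψ` of `A_r` is determined by the equivalence relation
`i ~ j ↔ i = j ∨ eᵢ - eⱼ ∈ Ψ`, so closed subsystems correspond to set partitions `P` of the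
index set. The subsystem of `P` is `Φ ∩ ker σ`, where `σ` sums the coordinates over each block;
it spans all of `ker σ`, of dimension `(r + 1) - #P`. Hence every closed subsystem satisfies
`Ψ = Φ ∩ span Ψ`, so it is maximal among the closed subsystems of its rank, and those of rank
`r - k` are counted by the partitions into `k + 1` blocks.
-/

open Finset Function

section FiberSum

variable {ι κ R : Type*} [Fintype ι] [DecidableEq ι] [DecidableEq κ]

def fiberSum [Semiring R] (π : ι → κ) : (ι → R) →ₗ[R] (κ → R) where
  toFun v b := ∑ i with π i = b, v i
  map_add' u v := by ext; simp [sum_add_distrib]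
  map_smul' c v := by ext; simp [mul_sum]

variable (π : ι → κ)

lemma fiberSum_single [Semiring R] (i : ι) :
    fiberSum π (Pi.single i (1 : R)) = Pi.single (π i) 1 := by
  ext b
  simp [fiberSum, Pi.single_apply, eq_comm]

lemma fiberSum_single_sub_single_eq_zero_iff [Ring R] [Nontrivial R] {i j : ι} :
    fiberSum π (Pi.single i 1 - Pi.single j 1 : ι → R) = 0 ↔ π i = π j := by
  rw [map_sub, fiberSum_single, fiberSum_single, sub_eq_zero]
  refine ⟨fun h => by_contra fun hne => ?_, fun h => h ▸ rfl⟩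
  simpa [hne] using congrFun h (π i)

variable [Fintype κ] {π}

lemma fiberSum_surjective [Semiring R] (hπ : Surjective π) :
    Surjective (fiberSum (R := R) π) := by
  intro f
  refine ⟨∑ b, f b • Pi.single (surjInv hπ b) 1, ?_⟩
  simp only [map_sum, map_smul, fiberSum_single, surjInv_eq hπ]
  exact (pi_eq_sum_univ' f).symm

lemma ker_fiberSum_le_span [Ring R] (hπ : Surjective π) {S : Set (ι → R)}
    (hS : ∀ i j, i ≠ j → π i = π j → Pi.single i (1 : R) - Pi.single j 1 ∈ S) :
    LinearMap.ker (fiberSum π) ≤ Submodule.span R S := by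
  intro v hv
  have hsum : ∑ i, v i • Pi.single (surjInv hπ (π i)) (1 : R) = 0 := by
    rw [← sum_fiberwise univ π]
    refine sum_eq_zero fun b _ => ?_
    calc ∑ i with π i = b, v i • Pi.single (surjInv hπ (π i)) (1 : R)
        = ∑ i with π i = b, v i • Pi.single (surjInv hπ b) 1 :=
          sum_congr rfl fun i hi => by rw [(mem_filter.1 hi).2]
      _ = fiberSum π v b • Pi.single (surjInv hπ b) 1 := (sum_smul ..).symm
      _ = 0 := by rw [LinearMap.mem_ker.1 hv, Pi.zero_apply, zero_smul]
  have hv : v = ∑ i, v i • (Pi.single i 1 - Pi.single (surjInv hπ (π i)) 1) := by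
    simp only [smul_sub, sum_sub_distrib, hsum, sub_zero]
    exact pi_eq_sum_univ' v
  rw [hv]
  refine Submodule.sum_mem _ fun i _ => Submodule.smul_mem _ _ ?_
  by_cases hi : i = surjInv hπ (π i)
  · rw [← hi, sub_self]
    exact Submodule.zero_mem _
  · exact Submodule.subset_span (hS _ _ hi (surjInv_eq hπ _).symm)

lemma finrank_ker_fiberSum_add [DivisionRing R] (hπ : Surjective π) :
    Module.finrank R (LinearMap.ker (fiberSum (R := R) π)) + Fintype.card κ =
      Fintype.card ι := by
  have := LinearMap.finrank_range_add_finrank_ker (fiberSum (R := R) π)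
  rw [LinearMap.range_eq_top.2 (fiberSum_surjective hπ), finrank_top,
    Module.finrank_fintype_fun_eq_card, Module.finrank_fintype_fun_eq_card] at this
  omega

end FiberSum

section ClosedSubsystems

variable {E : Type*} [AddCommGroup E] {Θ Ψ Ψ' : Set E}

lemma isClosedSub_inter_submodule_s15 {R : Type*} [Ring R] [Module R E]
    (hΘ : ∀ l ∈ Θ, -l ∈ Θ) (W : Submodule R E) : IsClosedSub Θ (Θ ∩ W) :=
  ⟨Set.inter_subset_left, fun l hl => ⟨hΘ l hl.1, W.neg_mem hl.2⟩,
    fun _ hl _ hm hlm => ⟨hlm, W.add_mem hl.2 hm.2⟩⟩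

lemma eq_of_subset_of_rankOf_eq [Module ℚ E] [FiniteDimensional ℚ E]
    (hΨ : Θ ∩ Submodule.span ℚ Ψ ⊆ Ψ) (hΨ' : Ψ' ⊆ Θ) (hsub : Ψ ⊆ Ψ')
    (hrank : rankOf Ψ' = rankOf Ψ) : Ψ' = Ψ := by
  have hspan : Submodule.span ℚ Ψ = Submodule.span ℚ Ψ' :=
    Submodule.eq_of_le_of_finrank_eq (Submodule.span_mono hsub) hrank.symm
  refine hsub.antisymm' fun v hv => hΨ ⟨hΨ' hv, ?_⟩
  rw [hspan]
  exact Submodule.subset_span hv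

end ClosedSubsystems

namespace Finpartition

variable {α : Type*} [DecidableEq α] {s : Finset α}

lemma mem_parts_iff_exists_part_eq (P : Finpartition s) {t : Finset α} :
    t ∈ P.parts ↔ ∃ a ∈ s, P.part a = t :=
  ⟨fun ht => P.part_surjOn ht, by rintro ⟨a, ha, rfl⟩; exact P.part_mem.2 ha⟩

lemma ext_of_part_eq_part_iff {P Q : Finpartition s}
    (h : ∀ a ∈ s, ∀ b ∈ s, P.part a = P.part b ↔ Q.part a = Q.part b) : P = Q := by
  have hpart : ∀ a ∈ s, P.part a = Q.part a := fun a ha => by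
    ext b
    by_cases hb : b ∈ s
    · rw [P.mem_part_iff_part_eq_part hb ha, Q.mem_part_iff_part_eq_part hb ha, h b hb a ha]
    · exact iff_of_false (fun h => hb (P.part_subset a h)) (fun h => hb (Q.part_subset a h))
  ext t
  simp only [mem_parts_iff_exists_part_eq]
  exact exists_congr fun a => and_congr_right fun ha => by rw [hpart a ha]

variable [Fintype α] (P : Finpartition (univ : Finset α))

def toParts (a : α) : P.parts := ⟨P.part a, P.part_mem.2 (mem_univ a)⟩

lemma toParts_surjective : Surjective P.toParts := by
  rintro ⟨t, ht⟩
  obtain ⟨a, -, rfl⟩ := P.part_surjOn ht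
  exact ⟨a, rfl⟩

end Finpartition

section TypeA

variable {ι : Type*} [DecidableEq ι]

variable (ι) in
def rootsA : Set (ι → ℚ) :=
  {v | ∃ i j : ι, i ≠ j ∧ v = Pi.single i 1 - Pi.single j 1}

lemma typeA_eq_rootsA (r : ℕ) : typeA r = rootsA (Fin (r + 1)) := rfl

lemma neg_mem_rootsA {v : ι → ℚ} (hv : v ∈ rootsA ι) : -v ∈ rootsA ι := by
  obtain ⟨i, j, hij, rfl⟩ := hv
  exact ⟨j, i, hij.symm, neg_sub _ _⟩

variable [Fintype ι] (P : Finpartition (univ : Finset ι))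

def rootSubsystem : Set (ι → ℚ) :=
  rootsA ι ∩ (LinearMap.ker (fiberSum (R := ℚ) P.toParts) : Set (ι → ℚ))

lemma single_sub_single_mem_rootSubsystem_iff {i j : ι} (hij : i ≠ j) :
    Pi.single i 1 - Pi.single j 1 ∈ rootSubsystem P ↔ P.part i = P.part j := by
  simp only [rootSubsystem, Set.mem_inter_iff, SetLike.mem_coe, LinearMap.mem_ker,
    fiberSum_single_sub_single_eq_zero_iff, Finpartition.toParts, Subtype.mk.injEq]
  exact and_iff_right ⟨i, j, hij, rfl⟩

lemma span_rootSubsystem :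
    Submodule.span ℚ (rootSubsystem P) = LinearMap.ker (fiberSum P.toParts) :=
  (Submodule.span_le.2 Set.inter_subset_right).antisymm <|
    ker_fiberSum_le_span P.toParts_surjective fun i j hij h =>
      ⟨⟨i, j, hij, rfl⟩, (fiberSum_single_sub_single_eq_zero_iff _).2 h⟩

lemma rankOf_rootSubsystem_add_card_parts :
    rankOf (rootSubsystem P) + #P.parts = Fintype.card ι := by
  rw [rankOf, span_rootSubsystem, ← Fintype.card_coe P.parts]
  exact finrank_ker_fiberSum_add P.toParts_surjective

lemma isClosedSub_rootSubsystem : IsClosedSub (rootsA ι) (rootSubsystem P) :=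
  isClosedSub_inter_submodule_s15 (fun _ => neg_mem_rootsA) _

lemma rootSubsystem_injective : Injective (rootSubsystem (ι := ι)) := by
  intro P Q h
  refine Finpartition.ext_of_part_eq_part_iff fun i _ j _ => ?_
  obtain rfl | hij := eq_or_ne i j
  · simp
  · rw [← single_sub_single_mem_rootSubsystem_iff P hij,
      ← single_sub_single_mem_rootSubsystem_iff Q hij, h]

def IsClosedSub.setoid {Ψ : Set (ι → ℚ)} (hΨ : IsClosedSub (rootsA ι) Ψ) : Setoid ι where
  r i j := i = j ∨ Pi.single i 1 - Pi.single j 1 ∈ Ψ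
  iseqv := by
    obtain ⟨-, hneg, hadd⟩ := hΨ
    refine ⟨fun _ => Or.inl rfl, ?_, ?_⟩
    · rintro i j (rfl | hij)
      exacts [Or.inl rfl, Or.inr (neg_sub (Pi.single i 1 : ι → ℚ) _ ▸ hneg _ hij)]
    · rintro i j k (rfl | hij) (rfl | hjk)
      · exact Or.inl rfl
      · exact Or.inr hjk
      · exact Or.inr hij
      obtain rfl | hik := eq_or_ne i k
      · exact Or.inl rfl
      refine Or.inr ?_
      rw [← sub_add_sub_cancel _ (Pi.single j 1)]
      exact hadd _ hij _ hjk (by rw [sub_add_sub_cancel]; exact ⟨i, k, hik, rfl⟩)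

lemma exists_rootSubsystem_eq {Ψ : Set (ι → ℚ)} (hΨ : IsClosedSub (rootsA ι) Ψ) :
    ∃ P : Finpartition (univ : Finset ι), rootSubsystem P = Ψ := by
  refine ⟨Finpartition.ofSetoid hΨ.setoid, Set.ext fun v => ?_⟩
  suffices h : ∀ i j, i ≠ j →
      (Pi.single i 1 - Pi.single j 1 ∈ rootSubsystem (Finpartition.ofSetoid hΨ.setoid) ↔
        Pi.single i 1 - Pi.single j 1 ∈ Ψ) by
    refine ⟨fun hv => ?_, fun hv => ?_⟩
    · obtain ⟨i, j, hij, rfl⟩ := hv.1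
      exact (h i j hij).1 hv
    · obtain ⟨i, j, hij, rfl⟩ := hΨ.1 hv
      exact (h i j hij).2 hv
  intro i j hij
  rw [single_sub_single_mem_rootSubsystem_iff _ hij, eq_comm,
    ← Finpartition.mem_part_iff_part_eq_part _ (mem_univ j) (mem_univ i),
    Finpartition.mem_part_ofSetoid_iff_rel]
  exact or_iff_right hij

lemma isMaxClosedOfRank_rootsA_iff {Ψ : Set (ι → ℚ)} {m : ℕ} :
    IsMaxClosedOfRank (rootsA ι) Ψ m ↔ IsClosedSub (rootsA ι) Ψ ∧ rankOf Ψ = m := by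
  refine ⟨fun h => ⟨h.1, h.2.1⟩, fun ⟨hΨ, hrank⟩ => ⟨hΨ, hrank, fun Ψ' hΨ' hrank' hsub => ?_⟩⟩
  obtain ⟨P, rfl⟩ := exists_rootSubsystem_eq hΨ
  refine eq_of_subset_of_rankOf_eq ?_ hΨ'.1 hsub (hrank'.trans hrank.symm)
  rw [span_rootSubsystem]
  exact subset_rfl

end TypeA

theorem statement15_general (r k : ℕ) (hk : k ≤ r) :
    {Ψ : Set (Fin (r + 1) → ℚ) | IsMaxClosedOfRank (typeA r) Ψ (r - k)}.ncard
      = stirling2 (r + 1) (k + 1) := by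
  have hmax : {Ψ | IsMaxClosedOfRank (typeA r) Ψ (r - k)} =
      rootSubsystem '' {P : Finpartition univ | #P.parts = k + 1} := by
    ext Ψ
    simp only [Set.mem_ofPred_eq, Set.mem_image, typeA_eq_rootsA, isMaxClosedOfRank_rootsA_iff]
    constructor
    · rintro ⟨hΨ, hrank⟩
      obtain ⟨P, rfl⟩ := exists_rootSubsystem_eq hΨ
      have := rankOf_rootSubsystem_add_card_parts P
      exact ⟨P, by rw [Fintype.card_fin] at this; omega, rfl⟩
    · rintro ⟨P, hP, rfl⟩
      have := rankOf_rootSubsystem_add_card_parts P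
      exact ⟨isClosedSub_rootSubsystem P, by rw [Fintype.card_fin] at this; omega⟩
  rw [hmax, Set.ncard_image_of_injective _ rootSubsystem_injective, stirling2,
    ← Nat.card_coe_set_eq]
  rfl

theorem statement15 (r k : ℕ) (hr : 1 ≤ r) (hk : k ≤ r) :
    {Ψ : Set (Fin (r + 1) → ℚ) | IsMaxClosedOfRank (typeA r) Ψ (r - k)}.ncard
      = stirling2 (r + 1) (k + 1) :=
  statement15_general r k hk
end
end
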